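/- arXiv:1906.09117 — 3 statements merged into one kernel-verified Lean document; each statement's English description precedes it below -/
import Mathlib

section
/- Let a ≥ 0 and b ≥ 1 be integers. Set v := u^a·((1+u)^p − 1)^b = u^a·φ(u)^b ∈ 𝔖 and v' := u^{a+bp}; both v and v' are units in 𝒪_ℰ. Then 𝔖[[p/v]] ⊆ 𝔖[[p/v']]; that is, for every sequence (s_n)_{n≥0} in 𝔖 there exists a sequence (t_n)_{n≥0} in 𝔖 such that Σ_{n≥0} p^n s_n v^{−n} = Σ_{n≥0} p^n t_n (v')^{−n} in 𝒪_ℰ (both series converge p-adically in 𝒪_ℰ). -/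
/-!
Write `u = X⁻¹` and `f = ((1 + X) ^ p - 1)⁻¹` in `𝒪_ℰ`. Since `(1 + X) ^ p - 1 = X ^ p + p X r`,
we get `f = u ^ p - p · (X r u ^ p f)`. Hence a monomial `u ^ i f ^ j` of weight `i + p j ≤ n`
is `t · u ^ n` plus `p` times an `𝔖`-combination of monomials of weight `≤ n + p`. As
`v⁻ᴺ = u ^ (a N) f ^ (b N)` has weight `(a + b p) N` and `p ≤ a + b p`, at the `N`-th power of `p`
one peels off the coefficient of `v'⁻ᴺ = u ^ ((a + b p) N)` and carries the remainder, of weight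
`≤ (a + b p) (N + 1)`, over to the next power of `p`.
-/

open PowerSeries

section Setup

variable (p : ℕ) [Fact p.Prime] (k : Type) [Field k] [CharP k p] [PerfectRing k p]

/-- `𝔖 = W(k)[[u]]`. -/
abbrev FrakS := PowerSeries (WittVector p k)

/-- `𝔖[1/u]`. -/
abbrev SLoc := Localization.Away (X : FrakS p k)

/-- `𝒪_ℰ`, the `p`-adic completion of `𝔖[1/u]`. -/
abbrev OE := AdicCompletion (Ideal.span {(p : SLoc p k)}) (SLoc p k)

/-- The canonical map `𝔖 → 𝒪_ℰ`. -/
noncomputable def iotaOE : FrakS p k →+* OE p k :=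
  (algebraMap (SLoc p k) (OE p k)).comp (algebraMap (FrakS p k) (SLoc p k))

/-- The `N`-th partial sum `Σ_{n<N} p^n s_n w^{-n}` of a series `Σ p^n s_n w^{-n}` in `𝒪_ℰ`. -/
noncomputable def partialSum (w : FrakS p k) (s : ℕ → FrakS p k) (N : ℕ) : OE p k :=
  ∑ n ∈ Finset.range N,
    iotaOE p k (s n) * (p : OE p k) ^ n * (Ring.inverse (iotaOE p k w)) ^ n

/-- `x ∈ 𝔖[[p/w]]`: `x` is the (`p`-adic) sum of a series `Σ_{n≥0} p^n s_n w^{-n}` with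
`s_n ∈ 𝔖`, i.e. the partial sums converge `p`-adically to `x`. -/
def memSeriesRing (w : FrakS p k) (x : OE p k) : Prop :=
  ∃ s : ℕ → FrakS p k, ∀ N : ℕ,
    x - partialSum p k w s N ∈ Ideal.span {(p : OE p k)} ^ N

end Setup

open Finset

section Rebase

variable {R A : Type*} [CommRing R] [CommRing A] [Algebra R A]

theorem exists_sum_sub_sum_eq_pow_mul (M : ℕ → Submodule R A) (P w w' : A)
    (hw : ∀ N, w ^ N ∈ M N)
    (hstep : ∀ N, ∀ x ∈ M N, ∃ t : R, ∃ y ∈ M (N + 1), x = t • w' ^ N + P * y)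
    (s : ℕ → R) :
    ∃ t : ℕ → R, ∀ N, ∃ y ∈ M N,
      ∑ n ∈ range N, algebraMap R A (s n) * P ^ n * w ^ n
        - ∑ n ∈ range N, algebraMap R A (t n) * P ^ n * w' ^ n = P ^ N * y := by
  have hstep' : ∀ N (x : M N), ∃ (t : R) (y : M (N + 1)), (x : A) = t • w' ^ N + P * y :=
    fun N x ↦ let ⟨t, y, hy, hx⟩ := hstep N x x.2; ⟨t, ⟨y, hy⟩, hx⟩
  choose T Y hTY using hstep'
  -- `y N` is the remainder after `N` steps, and `z N` what has to be rewritten at step `N`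
  let y : ∀ N, M N := fun N ↦
    Nat.rec (motive := fun N ↦ M N) 0 (fun N yN ↦ Y N (yN + s N • ⟨w ^ N, hw N⟩)) N
  let z : ∀ N, M N := fun N ↦ y N + s N • ⟨w ^ N, hw N⟩
  refine ⟨fun N ↦ T N (z N), fun N ↦ ⟨_, (y N).2, ?_⟩⟩
  induction N with
  | zero => simp [y]
  | succ N ih =>
    have hz : (z N).1 = (y N).1 + algebraMap R A (s N) * w ^ N := by
      simp [z, Algebra.smul_def]
    have hyz : y (N + 1) = Y N (z N) := rfl
    rw [sum_range_succ, sum_range_succ, hyz]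
    linear_combination ih - P ^ N * hz + P ^ N * hTY N (z N) +
      P ^ N * (Algebra.smul_def (T N (z N)) (w' ^ N))

end Rebase

section MonomialSpan

variable (R : Type*) {A : Type*} [CommRing R] [CommRing A] [Algebra R A]

def monomialSpan (u f : A) (q n : ℕ) : Submodule R A :=
  Submodule.span R {z | ∃ i j, i + q * j ≤ n ∧ z = u ^ i * f ^ j}

variable {R}

theorem monomial_mem_monomialSpan {u f : A} {q n i j : ℕ} (hij : i + q * j ≤ n) :
    u ^ i * f ^ j ∈ monomialSpan R u f q n :=
  Submodule.subset_span ⟨i, j, hij, rfl⟩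

theorem monomialSpan_mono {u f : A} {q m n : ℕ} (hmn : m ≤ n) :
    monomialSpan R u f q m ≤ monomialSpan R u f q n :=
  Submodule.span_mono fun _ ⟨i, j, hij, hz⟩ ↦ ⟨i, j, hij.trans hmn, hz⟩

theorem eq_pow_sub_of_mul_eq_one {U u c P f : A} {q : ℕ} (hu : U * u = 1)
    (hf : (U ^ q + P * c) * f = 1) : f = u ^ q - P * (c * u ^ q * f) := by
  have hUq : U ^ q * u ^ q = 1 := by rw [← mul_pow, hu, one_pow]
  linear_combination u ^ q * hf - f * hUq

variable {U π c : R} {u f : A} {q : ℕ}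

theorem exists_monomial_eq_smul_pow_add_mul (hu : algebraMap R A U * u = 1)
    (hf : algebraMap R A (U ^ q + π * c) * f = 1) {n : ℕ} (j : ℕ) :
    ∀ i, i + q * j ≤ n → ∃ t : R, ∃ y ∈ monomialSpan R u f q (n + q),
      u ^ i * f ^ j = t • u ^ n + algebraMap R A π * y := by
  induction j with
  | zero =>
    intro i hi
    obtain ⟨d, rfl⟩ := Nat.exists_eq_add_of_le (by simpa using hi)
    have hUd : algebraMap R A U ^ d * u ^ d = 1 := by rw [← mul_pow, hu, one_pow]
    refine ⟨U ^ d, 0, zero_mem _, ?_⟩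
    rw [Algebra.smul_def, map_pow]
    linear_combination (-u ^ i) * hUd
  | succ j ih =>
    intro i hij
    obtain ⟨t, y, hy, hyeq⟩ := ih (i + q) (by linarith)
    have hfu := eq_pow_sub_of_mul_eq_one hu (by simpa using hf)
    refine ⟨t, y - c • (u ^ (i + q) * f ^ (j + 1)), ?_, ?_⟩
    · exact sub_mem hy (Submodule.smul_mem _ _ (monomial_mem_monomialSpan (by linarith)))
    · rw [Algebra.smul_def c]
      linear_combination u ^ i * f ^ j * hfu + hyeq

theorem exists_eq_smul_pow_add_mul_of_mem_monomialSpan (hu : algebraMap R A U * u = 1)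
    (hf : algebraMap R A (U ^ q + π * c) * f = 1) {n : ℕ} {x : A}
    (hx : x ∈ monomialSpan R u f q n) :
    ∃ t : R, ∃ y ∈ monomialSpan R u f q (n + q), x = t • u ^ n + algebraMap R A π * y := by
  induction hx using Submodule.span_induction with
  | mem z hz =>
    obtain ⟨i, j, hij, rfl⟩ := hz
    exact exists_monomial_eq_smul_pow_add_mul hu hf j i hij
  | zero => exact ⟨0, 0, zero_mem _, by simp⟩
  | add x y _ _ hx hy =>
    obtain ⟨t, x', hx', rfl⟩ := hx
    obtain ⟨s, y', hy', rfl⟩ := hy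
    exact ⟨t + s, x' + y', add_mem hx' hy', by rw [add_smul]; ring⟩
  | smul r x _ hx =>
    obtain ⟨t, x', hx', rfl⟩ := hx
    refine ⟨r * t, r • x', Submodule.smul_mem _ _ hx', ?_⟩
    simp only [Algebra.smul_def, map_mul]
    ring

theorem exists_sub_sum_mem_of_sub_sum_mem (hu : algebraMap R A U * u = 1)
    (hf : algebraMap R A (U ^ q + π * c) * f = 1) {a b : ℕ} (hb : 1 ≤ b) {x : A} (s : ℕ → R)
    (hs : ∀ N, x - ∑ n ∈ range N,
        algebraMap R A (s n) * algebraMap R A π ^ n * (u ^ a * f ^ b) ^ n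
      ∈ Ideal.span {algebraMap R A π} ^ N) :
    ∃ t : ℕ → R, ∀ N, x - ∑ n ∈ range N,
        algebraMap R A (t n) * algebraMap R A π ^ n * (u ^ (a + b * q)) ^ n
      ∈ Ideal.span {algebraMap R A π} ^ N := by
  have hq : q ≤ a + b * q := le_add_left (le_mul_of_one_le_left' hb)
  obtain ⟨t, ht⟩ := exists_sum_sub_sum_eq_pow_mul (fun N ↦ monomialSpan R u f q ((a + b * q) * N))
    (algebraMap R A π) (u ^ a * f ^ b) (u ^ (a + b * q))
    (fun N ↦ by simpa [mul_pow, ← pow_mul] using monomial_mem_monomialSpan (le_of_eq (by ring)))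
    (fun N x hx ↦ by
      obtain ⟨t, y, hy, rfl⟩ := exists_eq_smul_pow_add_mul_of_mem_monomialSpan hu hf hx
      exact ⟨t, y, monomialSpan_mono (by nlinarith) hy, by rw [← pow_mul]⟩) s
  refine ⟨t, fun N ↦ ?_⟩
  obtain ⟨y, -, hy⟩ := ht N
  rw [← sub_add_sub_cancel, hy]
  exact add_mem (hs N)
    (Ideal.mul_mem_right _ _ (Ideal.pow_mem_pow (Ideal.mem_span_singleton_self _) N))

end MonomialSpan

theorem AdicCompletion.isUnit_one_add_algebraMap_mul {R : Type*} [CommRing R] {I : Ideal R}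
    (hI : I.FG) {r : R} (hr : r ∈ I) (z : AdicCompletion I R) :
    IsUnit (1 + algebraMap R (AdicCompletion I R) r * z) := by
  have := AdicCompletion.isAdicComplete_self I hI
  simpa [add_comm] using
    Ideal.mem_jacobson_bot.1 (IsAdicComplete.le_jacobson_bot _ (Ideal.mem_map_of_mem _ hr)) z

section OE

variable (p : ℕ) [Fact p.Prime] (k : Type) [Field k]

theorem partialSum_eq_sum_algebraMap (w : FrakS p k) (s : ℕ → FrakS p k) (N : ℕ) :
    partialSum p k w s N = ∑ n ∈ range N, algebraMap (FrakS p k) (OE p k) (s n) *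
      (p : OE p k) ^ n * Ring.inverse (iotaOE p k w) ^ n :=
  rfl

theorem exists_frobenius_X_eq :
    ∃ r : FrakS p k, ((1 + X) ^ p - 1 : FrakS p k) = X ^ p + (p : FrakS p k) * (X * r) := by
  obtain ⟨r, hr⟩ := exists_add_pow_prime_eq (Fact.out : p.Prime) (X : FrakS p k) 1
  exact ⟨r, by rw [add_comm, hr]; ring⟩

theorem isUnit_iotaOE_X : IsUnit (iotaOE p k X) :=
  (IsLocalization.Away.algebraMap_isUnit (X : FrakS p k)).map (algebraMap (SLoc p k) (OE p k))

theorem isUnit_one_add_p_mul (z : OE p k) : IsUnit (1 + p * z) := by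
  simpa using AdicCompletion.isUnit_one_add_algebraMap_mul (Submodule.fg_span_singleton _)
    (Ideal.mem_span_singleton_self (p : SLoc p k)) z

theorem isUnit_iotaOE_frobenius_X : IsUnit (iotaOE p k ((1 + X) ^ p - 1)) := by
  obtain ⟨r, hr⟩ := exists_frobenius_X_eq p k
  have hXp := (isUnit_iotaOE_X p k).pow p
  have : iotaOE p k ((1 + X) ^ p - 1) =
      iotaOE p k X ^ p * (1 + p * (iotaOE p k (X * r) * Ring.inverse (iotaOE p k X ^ p))) := by
    rw [hr, map_add, map_mul, map_pow, map_natCast]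
    linear_combination (-(p : OE p k) * iotaOE p k (X * r)) * Ring.mul_inverse_cancel _ hXp
  exact this ▸ hXp.mul (isUnit_one_add_p_mul p k _)

end OE

theorem statement1_general (p : ℕ) [Fact p.Prime] (k : Type) [Field k] (a b : ℕ) (hb : 1 ≤ b) :
    IsUnit (iotaOE p k (X ^ a * ((1 + X) ^ p - 1) ^ b)) ∧
    IsUnit (iotaOE p k (X ^ (a + b * p))) ∧
    ∀ x : OE p k,
      memSeriesRing p k (X ^ a * ((1 + X) ^ p - 1) ^ b) x →
      memSeriesRing p k (X ^ (a + b * p)) x := by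
  have hX := isUnit_iotaOE_X p k
  have hF := isUnit_iotaOE_frobenius_X p k
  refine ⟨by simpa using (hX.pow a).mul (hF.pow b), by simpa using hX.pow (a + b * p), ?_⟩
  rintro x ⟨s, hs⟩
  obtain ⟨r, hr⟩ := exists_frobenius_X_eq p k
  have hu : iotaOE p k X * Ring.inverse (iotaOE p k X) = 1 := Ring.mul_inverse_cancel _ hX
  have hf : iotaOE p k (X ^ p + (p : FrakS p k) * (X * r)) *
      Ring.inverse (iotaOE p k ((1 + X) ^ p - 1)) = 1 :=
    hr ▸ Ring.mul_inverse_cancel _ hF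
  have hv : Ring.inverse (iotaOE p k (X ^ a * ((1 + X) ^ p - 1) ^ b)) =
      Ring.inverse (iotaOE p k X) ^ a * Ring.inverse (iotaOE p k ((1 + X) ^ p - 1)) ^ b := by
    rw [map_mul, map_pow, map_pow, Ring.mul_inverse_rev, ← Ring.inverse_pow, ← Ring.inverse_pow,
      mul_comm]
  obtain ⟨t, ht⟩ := exists_sub_sum_mem_of_sub_sum_mem (a := a) (x := x) hu hf hb s
    (fun N ↦ by simpa only [map_natCast, partialSum_eq_sum_algebraMap, hv] using hs N)
  refine ⟨t, fun N ↦ ?_⟩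
  simpa only [map_natCast, partialSum_eq_sum_algebraMap, map_pow, ← Ring.inverse_pow] using ht N

theorem statement1 (p : ℕ) [Fact p.Prime] (k : Type) [Field k] [CharP k p]
    [PerfectRing k p] (a b : ℕ) (hb : 1 ≤ b) :
    IsUnit (iotaOE p k (X ^ a * ((1 + X) ^ p - 1) ^ b)) ∧
    IsUnit (iotaOE p k (X ^ (a + b * p))) ∧
    ∀ x : OE p k,
      memSeriesRing p k (X ^ a * ((1 + X) ^ p - 1) ^ b) x →
      memSeriesRing p k (X ^ (a + b * p)) x :=
  statement1_general p k a b hb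
end

section
/- Let m ≥ 1 and b ≥ 1 be integers. Then there exist s, t ∈ 𝔖 such that φ(u^{mb}) = ((1+u)^p − 1)^{mb} = u^{pm(b−1)}·s + p^{m+1}·t. In particular, φ(u^{mb}) lies in u^{pmb−pm}·𝔖 + p^{m+1}·𝔖, which (under the standard embedding 𝔖 ⊆ W(R)) yields the paper's statement that φ(u^{mb}) ∈ u^{pmb−pm}·W(R) modulo p^{m+1}·W(Fr R). -/
/-!
Write `(1 + u)^p - 1 = u^p + p·c`, so it lies in the ideal `(u^p, p)`. Hence its `mb`-th power
lies in `(u^p, p)^(m(b-1) + m)`, and expanding the power of a sum of two ideals, every product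
`(u^p)^i p^j` with `i + j = m(b-1) + m` has either `i ≥ m(b-1)` or `j ≥ m + 1`.
-/

open PowerSeries

lemma Ideal.sup_pow_add_le_pow_sup_pow_succ {R : Type*} [CommSemiring R] {I J : Ideal R}
    {n m : ℕ} : (I ⊔ J) ^ (n + m) ≤ I ^ n ⊔ J ^ (m + 1) := by
  rw [← Ideal.add_eq_sup, ← Ideal.add_eq_sup, add_pow, Ideal.sum_eq_sup]
  refine Finset.sup_le fun i hi ↦ ?_
  by_cases hn : n ≤ i
  · exact Ideal.mul_le_left.trans (Ideal.mul_le_left.trans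
      ((Ideal.pow_le_pow_right hn).trans le_sup_left))
  · refine Ideal.mul_le_left.trans (Ideal.mul_le_right.trans
      ((Ideal.pow_le_pow_right ?_).trans le_sup_right))
    rw [Finset.mem_range] at hi
    lia

lemma one_add_pow_prime_sub_one_mem_span_pair {R : Type*} [CommRing R] {p : ℕ} (hp : p.Prime)
    (x : R) : (1 + x) ^ p - 1 ∈ Ideal.span {x ^ p, (p : R)} := by
  obtain ⟨r, hr⟩ := exists_add_pow_prime_eq hp (1 : R) x
  exact Ideal.mem_span_pair.mpr ⟨1, x * r, by rw [hr]; ring⟩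

theorem statement3_general (p : ℕ) [Fact p.Prime] (k : Type*) [Field k]
    (m b : ℕ) (hb : 1 ≤ b) :
    ∃ s t : PowerSeries (WittVector p k),
      ((1 + X : PowerSeries (WittVector p k)) ^ p - 1) ^ (m * b) =
        X ^ (p * m * (b - 1)) * s + (p : PowerSeries (WittVector p k)) ^ (m + 1) * t := by
  set R := PowerSeries (WittVector p k)
  have hexp : m * b = m * (b - 1) + m := by
    rw [Nat.mul_sub_one, Nat.sub_add_cancel (Nat.le_mul_of_pos_right m hb)]
  have hpow : ((1 + X : R) ^ p - 1) ^ (m * b) ∈ Ideal.span {(X : R) ^ p, (p : R)} ^ (m * b) :=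
    Ideal.pow_mem_pow (one_add_pow_prime_sub_one_mem_span_pair Fact.out X) _
  rw [hexp, Ideal.span_insert] at hpow
  have hmem := Ideal.sup_pow_add_le_pow_sup_pow_succ hpow
  rw [Ideal.span_singleton_pow, Ideal.span_singleton_pow, ← pow_mul, ← mul_assoc,
    ← Ideal.span_insert, Ideal.mem_span_pair] at hmem
  obtain ⟨s, t, hst⟩ := hmem
  exact ⟨s, t, by rw [← hexp] at hst; rw [← hst]; ring⟩

theorem statement3 (p : ℕ) [Fact p.Prime] (k : Type*) [Field k] [CharP k p]
    [PerfectRing k p] (m b : ℕ) (hm : 1 ≤ m) (hb : 1 ≤ b) :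
    ∃ s t : PowerSeries (WittVector p k),
      ((1 + X : PowerSeries (WittVector p k)) ^ p - 1) ^ (m * b) =
        X ^ (p * m * (b - 1)) * s + (p : PowerSeries (WittVector p k)) ^ (m + 1) * t :=
  statement3_general p k m b hb
end

section
/- Let v ∈ 𝔖 with v ∉ p𝔖 (so v is a unit in 𝒪_ℰ). Suppose (x_n)_{n≥1} is a sequence in 𝔖 such that the elements y_n := x_n·v^{−(n−1)} ∈ 𝒪_ℰ satisfy y_{n+1} ≡ y_n modulo p^n·𝒪_ℰ for all n ≥ 1. Then the sequence (y_n) converges p-adically in 𝒪_ℰ to a limit y which lies in 𝔖[[p/v]]; that is, y = Σ_{ℓ≥0} s_ℓ·(p/v)^ℓ for some sequence (s_ℓ) in 𝔖. -/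
open PowerSeries

/-!
Because `𝒪_ℰ` is `p`-adically complete, `p` lies in its Jacobson radical. Splitting `v` at its
first coefficient prime to `p` gives `v = u^m w + p r` with `w ∈ 𝔖ˣ`, so `v` is a unit in `𝒪_ℰ`;
completeness also provides the limit `Y` of `(y_n)`. Multiplying `y_{n+1} - y_n` by `v^n` shows
that `p^n` divides `x_{n+1} - x_n v` in `𝒪_ℰ`, hence in `𝔖`, since `𝔖[1/u] ∩ p^n 𝒪_ℰ = p^n 𝔖[1/u]`
and `u` is a nonzerodivisor modulo `p^n`. With `s_0 = x_1` and `p^n s_n = x_{n+1} - x_n v`, the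
partial sums of `Σ s_n (p/v)^n` telescope to `y_N`.
-/

open IsLocalRing

namespace PowerSeries

variable {A : Type*} [CommRing A]

theorem C_dvd_iff {a : A} {f : A⟦X⟧} : C a ∣ f ↔ ∀ i, a ∣ coeff i f := by
  refine ⟨fun ⟨g, hg⟩ i => ⟨coeff i g, by rw [hg, coeff_C_mul]⟩, fun h => ?_⟩
  choose g hg using h
  exact ⟨mk g, ext fun i => by rw [coeff_C_mul, coeff_mk, hg]⟩

theorem C_dvd_of_C_dvd_X_pow_mul {a : A} {f : A⟦X⟧} {j : ℕ} (h : C a ∣ X ^ j * f) :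
    C a ∣ f :=
  C_dvd_iff.2 fun i => by simpa only [coeff_X_pow_mul] using C_dvd_iff.1 h (i + j)

theorem C_dvd_of_algebraMap_mem_span {S : Type*} [CommRing S] [Algebra A⟦X⟧ S]
    [IsLocalization.Away (X : A⟦X⟧) S] {a : A} {f : A⟦X⟧}
    (h : algebraMap A⟦X⟧ S f ∈ Ideal.span {algebraMap A⟦X⟧ S (C a)}) : C a ∣ f := by
  rw [← Set.image_singleton, ← Ideal.map_span,
    IsLocalization.algebraMap_mem_map_algebraMap_iff (Submonoid.powers X)] at h
  obtain ⟨_, ⟨j, rfl⟩, hj⟩ := h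
  exact C_dvd_of_C_dvd_X_pow_mul (Ideal.mem_span_singleton.1 hj)

theorem exists_eq_X_pow_mul_add_C_mul [IsLocalRing A] {a : A}
    (ha : maximalIdeal A = Ideal.span {a}) {g : A⟦X⟧} (hg : ¬ C a ∣ g) :
    ∃ (m : ℕ) (w r : A⟦X⟧), IsUnit w ∧ g = X ^ m * w + C a * r := by
  have hmap : g.map (residue A) ≠ 0 := by
    refine fun h0 => hg (C_dvd_iff.2 fun i => ?_)
    rw [← Ideal.mem_span_singleton, ← ha, ← residue_eq_zero_iff, ← coeff_map, h0, map_zero]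
  set m := (g.map (residue A)).order.toNat
  obtain ⟨r, hr⟩ : C a ∣ (g.trunc m : A⟦X⟧) := by
    refine C_dvd_iff.2 fun i => ?_
    rw [Polynomial.coeff_coe, coeff_trunc]
    split_ifs with hi
    · rw [← Ideal.mem_span_singleton, ← ha, ← residue_eq_zero_iff, ← coeff_map]
      exact coeff_of_lt_order_toNat i hi
    · exact dvd_zero a
  refine ⟨m, _, r, (IsWeierstrassDivisor.of_map_ne_zero hmap).isUnit_shift, ?_⟩
  rw [← hr]
  exact eq_X_pow_mul_shift_add_trunc m g

end PowerSeries

theorem IsUnit.add_mem_jacobson_bot {R : Type*} [CommRing R] {u x : R} (hu : IsUnit u)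
    (hx : x ∈ (⊥ : Ideal R).jacobson) : IsUnit (u + x) := by
  obtain ⟨u, rfl⟩ := hu
  convert u.isUnit.mul (Ideal.mem_jacobson_bot.1 hx ↑u⁻¹) using 1
  rw [mul_add, mul_comm x, ← mul_assoc, Units.mul_inv, one_mul, mul_one, add_comm]

namespace AdicCompletion

variable {R : Type*} [CommRing R]

theorem mem_pow_of_algebraMap_mem_map_pow (I : Ideal R) {n : ℕ} {r : R}
    (h : algebraMap R (AdicCompletion I R) r ∈ I.map (algebraMap R (AdicCompletion I R)) ^ n) :
    r ∈ I ^ n := by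
  rw [← Ideal.map_pow, ← Submodule.restrictScalars_mem R, ← Ideal.smul_top_eq_map] at h
  have := pow_smul_top_le_ker_eval (I := I) (M := R) n h
  rw [LinearMap.mem_ker, algebraMap_apply, Algebra.algebraMap_self, RingHom.id_apply, eval_of,
    Submodule.mkQ_apply, Submodule.Quotient.mk_eq_zero, smul_eq_mul, Ideal.mul_top] at this
  exact this

theorem isAdicComplete_span_algebraMap (a : R) :
    IsAdicComplete (Ideal.span {algebraMap R (AdicCompletion (Ideal.span {a}) R) a})
      (AdicCompletion (Ideal.span {a}) R) := by
  have := isAdicComplete_self (Ideal.span {a}) (Submodule.fg_span_singleton a)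
  rwa [Ideal.map_span, Set.image_singleton] at this

end AdicCompletion

theorem IsPrecomplete.exists_sub_mem_pow {R : Type*} [CommRing R] {I : Ideal R}
    [IsPrecomplete I R] (y : ℕ → R) (hy : ∀ n, y (n + 1) - y n ∈ I ^ n) :
    ∃ L, ∀ n, L - y n ∈ I ^ n := by
  have hcauchy : ∀ {m n}, m ≤ n → y m ≡ y n [SMOD (I ^ m • ⊤ : Submodule R R)] := by
    intro m n hmn
    rw [SModEq.sub_mem, smul_eq_mul, Ideal.mul_top, ← neg_mem_iff, neg_sub]
    induction n, hmn using Nat.le_induction with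
    | base => simp
    | succ n hmn ih =>
      simpa using add_mem (Ideal.pow_le_pow_right hmn (hy n)) ih
  obtain ⟨L, hL⟩ := IsPrecomplete.prec inferInstance hcauchy
  refine ⟨L, fun n => ?_⟩
  have := (hL n).symm
  rwa [SModEq.sub_mem, smul_eq_mul, Ideal.mul_top] at this

section

variable (p : ℕ) [Fact p.Prime] (k : Type) [Field k]

instance : IsAdicComplete (Ideal.span {(p : OE p k)}) (OE p k) := by
  simpa only [map_natCast] using AdicCompletion.isAdicComplete_span_algebraMap (p : SLoc p k)

variable {p k}

theorem pow_dvd_of_iotaOE_mem_pow {f : FrakS p k} {n : ℕ}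
    (h : iotaOE p k f ∈ Ideal.span {(p : OE p k)} ^ n) : (p : FrakS p k) ^ n ∣ f := by
  have hSLoc : algebraMap (FrakS p k) (SLoc p k) f ∈ Ideal.span {(p : SLoc p k)} ^ n := by
    refine AdicCompletion.mem_pow_of_algebraMap_mem_map_pow _ ?_
    rwa [Ideal.map_span, Set.image_singleton, map_natCast]
  have hC : (p : FrakS p k) ^ n = C ((p : WittVector p k) ^ n) := by simp
  rw [Ideal.span_singleton_pow, ← map_natCast (algebraMap (FrakS p k) (SLoc p k)), ← map_pow,
    hC] at hSLoc
  rw [hC]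
  exact C_dvd_of_algebraMap_mem_span hSLoc

theorem isUnit_iotaOE [CharP k p] [PerfectRing k p] {v : FrakS p k}
    (hv : v ∉ Ideal.span {(p : FrakS p k)}) :
    IsUnit (iotaOE p k v) := by
  have hmax : maximalIdeal (WittVector p k) = Ideal.span {(p : WittVector p k)} :=
    (IsDiscreteValuationRing.irreducible_iff_uniformizer _).1 (WittVector.irreducible p)
  obtain ⟨m, w, r, hw, rfl⟩ := exists_eq_X_pow_mul_add_C_mul hmax
    (by simpa [Ideal.mem_span_singleton] using hv)
  have hX : IsUnit (iotaOE p k X) :=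
    (IsLocalization.Away.algebraMap_isUnit (X : FrakS p k)).map (algebraMap (SLoc p k) (OE p k))
  rw [map_natCast C, map_add, map_mul, map_pow, map_mul, map_natCast]
  refine ((hX.pow m).mul (hw.map _)).add_mem_jacobson_bot ?_
  exact IsAdicComplete.le_jacobson_bot _
    (Ideal.mul_mem_right _ _ (Ideal.mem_span_singleton_self _))

theorem iotaOE_sub_mul_eq {v : FrakS p k} (hv : IsUnit (iotaOE p k v)) (a b : FrakS p k)
    {n : ℕ} (hn : 1 ≤ n) :
    iotaOE p k (a - b * v) =
      (iotaOE p k a * Ring.inverse (iotaOE p k v) ^ n -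
        iotaOE p k b * Ring.inverse (iotaOE p k v) ^ (n - 1)) * iotaOE p k v ^ n := by
  obtain ⟨u, hu⟩ := hv
  obtain ⟨m, rfl⟩ := Nat.exists_eq_add_of_le' hn
  rw [← hu, Ring.inverse_unit, map_sub, map_mul, ← hu, Nat.add_sub_cancel, sub_mul, mul_assoc,
    mul_assoc, ← mul_pow, Units.inv_mul, one_pow, mul_one, pow_succ, ← mul_assoc (_ ^ m),
    ← mul_pow, Units.inv_mul, one_pow, one_mul]

theorem exists_partialSum_eq {v : FrakS p k} (hv : IsUnit (iotaOE p k v)) {x : ℕ → FrakS p k}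
    (hdvd : ∀ n, 1 ≤ n → (p : FrakS p k) ^ n ∣ x (n + 1) - x n * v) :
    ∃ s, ∀ N, 1 ≤ N →
      partialSum p k v s N = iotaOE p k (x N) * Ring.inverse (iotaOE p k v) ^ (N - 1) := by
  choose! s hs using hdvd
  refine ⟨Function.update s 0 (x 1), fun N hN => ?_⟩
  induction N, hN using Nat.le_induction with
  | base => simp [partialSum]
  | succ N hN ih =>
    rw [partialSum, Finset.sum_range_succ, ← partialSum, ih,
      Function.update_of_ne (by omega), Nat.add_sub_cancel]
    have hterm : iotaOE p k (s N) * (p : OE p k) ^ N * Ring.inverse (iotaOE p k v) ^ N =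
        iotaOE p k (x (N + 1)) * Ring.inverse (iotaOE p k v) ^ N -
          iotaOE p k (x N) * Ring.inverse (iotaOE p k v) ^ (N - 1) := by
      rw [← map_natCast (iotaOE p k), ← map_pow, ← map_mul, mul_comm (s N), ← hs N hN,
        iotaOE_sub_mul_eq hv _ _ hN, mul_assoc, ← mul_pow, Ring.mul_inverse_cancel _ hv, one_pow,
        mul_one]
    rw [hterm, add_sub_cancel]

end

theorem statement4 (p : ℕ) [Fact p.Prime] (k : Type) [Field k] [CharP k p]
    [PerfectRing k p]
    (v : FrakS p k) (hv : v ∉ Ideal.span {(p : FrakS p k)})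
    (x : ℕ → FrakS p k) (y : ℕ → OE p k)
    (hy : ∀ n, 1 ≤ n →
      y n = iotaOE p k (x n) * (Ring.inverse (iotaOE p k v)) ^ (n - 1))
    (hcauchy : ∀ n, 1 ≤ n →
      y (n + 1) - y n ∈ Ideal.span {(p : OE p k)} ^ n) :
    IsUnit (iotaOE p k v) ∧
    ∃ Y : OE p k,
      (∀ n, 1 ≤ n → Y - y n ∈ Ideal.span {(p : OE p k)} ^ n) ∧
      memSeriesRing p k v Y := by
  have hvu := isUnit_iotaOE hv
  obtain ⟨Y, hY⟩ := IsPrecomplete.exists_sub_mem_pow y fun n => by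
    rcases Nat.eq_zero_or_pos n with rfl | hn
    · simp
    · exact hcauchy n hn
  have hdvd : ∀ n, 1 ≤ n → (p : FrakS p k) ^ n ∣ x (n + 1) - x n * v := fun n hn => by
    have h := hcauchy n hn
    rw [hy (n + 1) (by omega), hy n hn, Nat.add_sub_cancel] at h
    refine pow_dvd_of_iotaOE_mem_pow ?_
    rw [iotaOE_sub_mul_eq hvu _ _ hn]
    exact Ideal.mul_mem_right _ _ h
  obtain ⟨s, hs⟩ := exists_partialSum_eq hvu hdvd
  refine ⟨hvu, Y, fun n _ => hY n, s, fun N => ?_⟩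
  rcases Nat.eq_zero_or_pos N with rfl | hN
  · simp
  · rw [hs N hN, ← hy N hN]
    exact hY N
end
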